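/- Let α > 0, x_0 ∈ [0,π], l ∈ (0,π), and suppose x_0(1−l·c_α) < π−l. Set a_m = x_0(1−l·c_α) and define F(a) = u_{χ_{[a−l,a+l]}}(x_0) for a ∈ [−π+l, π−l]. Then F is increasing on [−π+l, a_m] and decreasing on [a_m, π−l]; consequently F attains its minimum over [−π+l,π−l] at a = −π+l, where F(−π+l) = l·(((π−l)c_α − 1)x_0 + 1/c_α + l − π) if x_0 > −π+2l and F(−π+l) = −x_0²/2 − (π−l)(1−l·c_α)x_0 − l² + l(1/c_α + π) − π²/2 if x_0 ≤ −π+2l, and it attains its maximum at a = a_m, where F(a_m) = (l/c_α)(1 − l·c_α/2)(1 − x_0²c_α²). -/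

import Mathlib

open MeasureTheory Real Set Filter

noncomputable def cA (α : ℝ) : ℝ := α / (1 + α * π)

noncomputable def robinG (α x y : ℝ) : ℝ :=
  -(1/2) * cA α * x * y - (1/2) * |x - y| + 1 / (2 * cA α)

/-- Solution of the Robin problem with heat source `f`. -/
noncomputable def robinSol (α : ℝ) (f : ℝ → ℝ) (x : ℝ) : ℝ :=
  ∫ y in (-π)..π, robinG α x y * f y

/-- The class 𝔉(m,M,s) of heat sources. -/
def memF (m M s : ℝ) (f : ℝ → ℝ) : Prop :=
  MeasureTheory.IntegrableOn f (Set.Icc (-π) π) MeasureTheory.volume ∧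
  (∀ᵐ x ∂(MeasureTheory.volume.restrict (Set.Icc (-π) π)), m ≤ f x ∧ f x ≤ M) ∧
  (∫ x in (-π)..π, f x) = 2 * π * s

/-- Temperature gap (oscillation) over `[-π, π]`. -/
noncomputable def osc (u : ℝ → ℝ) : ℝ :=
  sSup (u '' Set.Icc (-π) π) - sInf (u '' Set.Icc (-π) π)

/-!
Let `Φ` be a primitive of `y ↦ G(x₀, y)`, so that `F(a) = Φ(a + l) - Φ(a - l)` and
`F'(a) = G(x₀, a + l) - G(x₀, a - l) = -c_α x₀ l - max(-l, min(a - x₀, l))`. Since `0 ≤ c_α x₀ < 1`,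
this is positive for `a < a_m` and negative for `a > a_m`, so `F` rises to its maximum at `a_m` and
its minimum is at an endpoint. The left endpoint wins because `G(x₀, -y) ≤ G(x₀, y)` on `[0, π]`:
then `Ψ(y) = Φ(y) + Φ(-y)` is even and increasing on `[0, π]`, and
`F(a) - F(-a) = Ψ(a + l) - Ψ(|a - l|) ≥ 0` for `a = π - l`.
-/

open Topology

theorem hasDerivAt_mul_abs (y : ℝ) : HasDerivAt (fun t : ℝ => t * |t|) (2 * |y|) y := by
  rcases eq_or_ne y 0 with rfl | hy
  · rw [hasDerivAt_iff_tendsto_slope]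
    have hslope : (fun t : ℝ => |t|) =ᶠ[𝓝[≠] 0] slope (fun t : ℝ => t * |t|) 0 := by
      filter_upwards [self_mem_nhdsWithin] with t (ht : t ≠ 0)
      simp [slope_def_field, ht]
    simpa using (continuous_abs.tendsto' 0 0 abs_zero).mono_left nhdsWithin_le_nhds
      |>.congr' hslope
  · have h := (hasDerivAt_id' y).mul (hasDerivAt_abs hy)
    rw [one_mul, self_mul_sign, ← two_mul] at h
    exact h

theorem abs_add_sub_abs_sub (s : ℝ) {l : ℝ} (hl : 0 ≤ l) :
    |s + l| - |s - l| = 2 * max (-l) (min s l) := by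
  rcases le_total s (-l) with hs | hs
  · rw [abs_of_nonpos (by linarith), abs_of_nonpos (by linarith), min_eq_left (by linarith),
      max_eq_left hs]
    ring
  rcases le_total s l with hs' | hs'
  · rw [abs_of_nonneg (by linarith), abs_of_nonpos (by linarith), min_eq_left hs',
      max_eq_right hs]
    ring
  · rw [abs_of_nonneg (by linarith), abs_of_nonneg (by linarith), min_eq_right hs',
      max_eq_right (by linarith)]
    ring

theorem apply_le_of_monotoneOn_of_antitoneOn {α β : Type*} [LinearOrder α] [Preorder β]
    {f : α → β} {a m b : α} (hmono : MonotoneOn f (Icc a m)) (hanti : AntitoneOn f (Icc m b))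
    (ham : a ≤ m) (hmb : m ≤ b) {x : α} (hx : x ∈ Icc a b) : f x ≤ f m := by
  rcases le_total x m with h | h
  · exact hmono ⟨hx.1, h⟩ ⟨ham, le_rfl⟩ h
  · exact hanti ⟨le_rfl, hmb⟩ ⟨h, hx.2⟩ h

theorem apply_left_le_of_monotoneOn_of_antitoneOn {α β : Type*} [LinearOrder α] [Preorder β]
    {f : α → β} {a m b : α} (hmono : MonotoneOn f (Icc a m)) (hanti : AntitoneOn f (Icc m b))
    (ham : a ≤ m) (hmb : m ≤ b) (hab : f a ≤ f b) {x : α} (hx : x ∈ Icc a b) : f a ≤ f x := by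
  rcases le_total x m with h | h
  · exact hmono ⟨le_rfl, ham⟩ ⟨hx.1, h⟩ hx.1
  · exact hab.trans (hanti ⟨h, hx.2⟩ ⟨hmb, le_rfl⟩ hx.2)

theorem cA_pos {α : ℝ} (hα : 0 < α) : 0 < cA α :=
  div_pos hα (by positivity)

theorem cA_mul_pi_lt_one {α : ℝ} (hα : 0 < 1 + α * π) : cA α * π < 1 := by
  rw [cA, div_mul_eq_mul_div, div_lt_one hα]
  linarith

noncomputable def robinPrimitive (α x y : ℝ) : ℝ :=
  y / (2 * cA α) - cA α * x * y ^ 2 / 4 - (y - x) * |y - x| / 4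

theorem hasDerivAt_robinPrimitive (α x y : ℝ) :
    HasDerivAt (robinPrimitive α x) (robinG α x y) y := by
  have h := (((hasDerivAt_id' y).div_const (2 * cA α)).sub
    (((hasDerivAt_pow 2 y).const_mul (cA α * x)).div_const 4)).sub
    (((hasDerivAt_mul_abs (y - x)).comp y ((hasDerivAt_id' y).sub_const x)).div_const 4)
  refine h.congr_deriv ?_
  rw [robinG, abs_sub_comm x y]
  ring

theorem robinSol_indicator_Icc (α x : ℝ) {p q : ℝ} (hp : -π ≤ p) (hpq : p ≤ q) (hq : q ≤ π) :
    robinSol α ((Icc p q).indicator fun _ => 1) x = robinPrimitive α x q - robinPrimitive α x p := by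
  calc robinSol α ((Icc p q).indicator fun _ => 1) x
      = ∫ y in Icc (-π) π, (Icc p q).indicator (robinG α x) y := by
        rw [robinSol, intervalIntegral.integral_of_le (by linarith), ← integral_Icc_eq_integral_Ioc]
        congr 1 with y
        by_cases hy : y ∈ Icc p q <;> simp [hy]
    _ = ∫ y in p..q, robinG α x y := by
        rw [setIntegral_indicator measurableSet_Icc, inter_eq_right.2 (Icc_subset_Icc hp hq),
          integral_Icc_eq_integral_Ioc, intervalIntegral.integral_of_le hpq]
    _ = robinPrimitive α x q - robinPrimitive α x p :=
        intervalIntegral.integral_eq_sub_of_hasDerivAt (fun y _ => hasDerivAt_robinPrimitive α x y)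
          ((by unfold robinG; fun_prop : Continuous (robinG α x)).intervalIntegrable _ _)

noncomputable def robinWindow (α x l a : ℝ) : ℝ :=
  robinPrimitive α x (a + l) - robinPrimitive α x (a - l)

theorem robinSol_indicator_eq_robinWindow (α x : ℝ) {l a : ℝ} (hl : 0 ≤ l)
    (ha : a ∈ Icc (-π + l) (π - l)) :
    robinSol α ((Icc (a - l) (a + l)).indicator fun _ => 1) x = robinWindow α x l a :=
  robinSol_indicator_Icc α x (by linarith [ha.1]) (by linarith) (by linarith [ha.2])

theorem hasDerivAt_robinWindow (α x : ℝ) {l : ℝ} (hl : 0 ≤ l) (a : ℝ) :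
    HasDerivAt (robinWindow α x l) (-(cA α * x * l) - max (-l) (min (a - x) l)) a := by
  refine ((hasDerivAt_robinPrimitive α x (a + l)).comp_add_const a l).sub
    ((hasDerivAt_robinPrimitive α x (a - l)).comp_sub_const a l) |>.congr_deriv ?_
  have h := abs_add_sub_abs_sub (a - x) hl
  rw [show a - x + l = a + l - x by ring, show a - x - l = a - l - x by ring] at h
  simp only [robinG, abs_sub_comm x]
  linear_combination (-1 / 2 : ℝ) * h

theorem strictMonoOn_robinWindow (α x : ℝ) {l : ℝ} (hl : 0 < l) (hcx : cA α * x < 1) :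
    StrictMonoOn (robinWindow α x l) (Iic (x * (1 - l * cA α))) := by
  refine strictMonoOn_of_hasDerivWithinAt_pos (convex_Iic _)
    (fun a _ => (hasDerivAt_robinWindow α x hl.le a).continuousAt.continuousWithinAt)
    (fun a _ => (hasDerivAt_robinWindow α x hl.le a).hasDerivWithinAt) fun a ha => ?_
  rw [interior_Iic, mem_Iio] at ha
  have hmax : max (-l) (min (a - x) l) < -(cA α * x * l) :=
    max_lt (by nlinarith) ((min_le_left _ _).trans_lt (by linarith))
  linarith

theorem strictAntiOn_robinWindow (α x : ℝ) {l : ℝ} (hl : 0 < l) (hcx : -1 < cA α * x) :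
    StrictAntiOn (robinWindow α x l) (Ici (x * (1 - l * cA α))) := by
  refine strictAntiOn_of_hasDerivWithinAt_neg (convex_Ici _)
    (fun a _ => (hasDerivAt_robinWindow α x hl.le a).continuousAt.continuousWithinAt)
    (fun a _ => (hasDerivAt_robinWindow α x hl.le a).hasDerivWithinAt) fun a ha => ?_
  rw [interior_Ici, mem_Ioi] at ha
  have hmax : -(cA α * x * l) < max (-l) (min (a - x) l) :=
    lt_max_of_lt_right (lt_min (by linarith) (by nlinarith))
  linarith

theorem robinG_neg_le {α x y : ℝ} (hc : 0 ≤ cA α) (hcπ : cA α * π ≤ 1) (hx : x ∈ Icc 0 π)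
    (hy : y ∈ Icc 0 π) : robinG α x (-y) ≤ robinG α x y := by
  have hcx : cA α * x ≤ 1 := by nlinarith [hx.2]
  have hcy : cA α * y ≤ 1 := by nlinarith [hy.2]
  simp only [robinG]
  rw [sub_neg_eq_add, abs_of_nonneg (by linarith [hx.1, hy.1] : 0 ≤ x + y)]
  rcases le_total x y with hxy | hxy
  · rw [abs_of_nonpos (by linarith)]
    nlinarith [mul_nonneg hx.1 (sub_nonneg.2 hcy)]
  · rw [abs_of_nonneg (by linarith)]
    nlinarith [mul_nonneg hy.1 (sub_nonneg.2 hcx)]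

theorem monotoneOn_robinPrimitive_add_neg {α x : ℝ} (hc : 0 ≤ cA α) (hcπ : cA α * π ≤ 1)
    (hx : x ∈ Icc 0 π) :
    MonotoneOn (fun y => robinPrimitive α x y + robinPrimitive α x (-y)) (Icc 0 π) := by
  have hderiv (y : ℝ) : HasDerivAt (fun y => robinPrimitive α x y + robinPrimitive α x (-y))
      (robinG α x y - robinG α x (-y)) y :=
    ((hasDerivAt_robinPrimitive α x y).add
      ((hasDerivAt_robinPrimitive α x (-y)).comp y (hasDerivAt_neg y))).congr_deriv (by ring)
  refine monotoneOn_of_hasDerivWithinAt_nonneg (convex_Icc 0 π)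
    (fun y _ => (hderiv y).continuousAt.continuousWithinAt)
    (fun y _ => (hderiv y).hasDerivWithinAt) fun y hy => ?_
  exact sub_nonneg.2 (robinG_neg_le hc hcπ hx (interior_subset hy))

theorem robinWindow_neg_le {α x l a : ℝ} (hc : 0 ≤ cA α) (hcπ : cA α * π ≤ 1)
    (hx : x ∈ Icc 0 π) (hl : 0 ≤ l) (ha : 0 ≤ a) (hal : a + l ≤ π) :
    robinWindow α x l (-a) ≤ robinWindow α x l a := by
  set Ψ := fun y => robinPrimitive α x y + robinPrimitive α x (-y) with hΨ
  have hΨ_abs : Ψ (a - l) = Ψ |a - l| := by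
    rcases abs_choice (a - l) with h | h <;> rw [h]
    simp only [hΨ, neg_neg, add_comm]
  have hwindow : robinWindow α x l a - robinWindow α x l (-a) = Ψ (a + l) - Ψ (a - l) := by
    rw [robinWindow, robinWindow, show -a + l = -(a - l) by ring, show -a - l = -(a + l) by ring]
    ring
  have habs : |a - l| ≤ a + l := abs_sub_le_iff.2 ⟨by linarith, by linarith⟩
  have hmono : Ψ |a - l| ≤ Ψ (a + l) :=
    monotoneOn_robinPrimitive_add_neg hc hcπ hx ⟨abs_nonneg _, habs.trans hal⟩
      ⟨by linarith, hal⟩ habs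
  linarith

theorem robinWindow_neg_pi_add (α x l : ℝ) (hx : -π ≤ x) :
    robinWindow α x l (-π + l) =
      if -π + 2 * l < x then
        l * (((π - l) * cA α - 1) * x + 1 / cA α + l - π)
      else
        -x^2/2 - (π - l) * (1 - l * cA α) * x - l^2 + l * (1 / cA α + π) - π^2/2 := by
  rw [robinWindow, robinPrimitive, robinPrimitive, show -π + l - l - x = -(π + x) by ring,
    abs_neg, abs_of_nonneg (by linarith : 0 ≤ π + x)]
  split_ifs with h
  · rw [abs_of_neg (by linarith : -π + l + l - x < 0)]
    ring
  · rw [abs_of_nonneg (by linarith : 0 ≤ -π + l + l - x)]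
    ring

theorem robinWindow_apex {α x l : ℝ} (hc : cA α ≠ 0) (hl : 0 ≤ l) (hcx : cA α * x ∈ Icc (-1) 1) :
    robinWindow α x l (x * (1 - l * cA α)) =
      (l / cA α) * (1 - l * cA α / 2) * (1 - x^2 * (cA α)^2) := by
  rw [robinWindow, robinPrimitive, robinPrimitive,
    abs_of_nonneg (by nlinarith [hcx.2] : 0 ≤ x * (1 - l * cA α) + l - x),
    abs_of_nonpos (by nlinarith [hcx.1] : x * (1 - l * cA α) - l - x ≤ 0)]
  field_simp
  ring

/-- Lemma 1, case `α > α_m`: behavior of `F(a) = u_{χ_{I(a,l)}}(x₀)`. -/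
theorem lemma1_sup_alpha (α x0 l : ℝ) (hα : 0 < α) (hx0 : x0 ∈ Set.Icc 0 π)
    (hl : l ∈ Set.Ioo 0 π) (hcond : x0 * (1 - l * cA α) < π - l)
    (am : ℝ) (ham : am = x0 * (1 - l * cA α))
    (F : ℝ → ℝ)
    (hF : F = fun a => robinSol α ((Set.Icc (a - l) (a + l)).indicator (fun _ => (1:ℝ))) x0) :
    StrictMonoOn F (Set.Icc (-π + l) am) ∧
    StrictAntiOn F (Set.Icc am (π - l)) ∧
    (∀ a ∈ Set.Icc (-π + l) (π - l), F (-π + l) ≤ F a) ∧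
    (F (-π + l) =
      if -π + 2 * l < x0 then
        l * (((π - l) * cA α - 1) * x0 + 1 / cA α + l - π)
      else
        -x0^2/2 - (π - l) * (1 - l * cA α) * x0 - l^2 + l * (1 / cA α + π) - π^2/2) ∧
    (∀ a ∈ Set.Icc (-π + l) (π - l), F a ≤ F am) ∧
    F am = (l / cA α) * (1 - l * cA α / 2) * (1 - x0^2 * (cA α)^2) := by
  subst ham
  obtain ⟨hx0, hx0π⟩ := hx0
  obtain ⟨hl0, hlπ⟩ := hl
  have hc := cA_pos hα
  have hcπ := cA_mul_pi_lt_one (by positivity : 0 < 1 + α * π)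
  have hcx0 : cA α * x0 < 1 := by nlinarith
  have hm : x0 * (1 - l * cA α) ∈ Icc (-π + l) (π - l) :=
    ⟨by nlinarith [mul_nonneg hx0 (by nlinarith : (0 : ℝ) ≤ 1 - l * cA α)], hcond.le⟩
  have hFW : EqOn F (robinWindow α x0 l) (Icc (-π + l) (π - l)) := fun a ha => by
    rw [hF]
    exact robinSol_indicator_eq_robinWindow α x0 hl0.le ha
  have hmono : StrictMonoOn F (Icc (-π + l) (x0 * (1 - l * cA α))) :=
    ((strictMonoOn_robinWindow α x0 hl0 hcx0).mono Icc_subset_Iic_self).congr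
      (hFW.symm.mono (Icc_subset_Icc_right hm.2))
  have hanti : StrictAntiOn F (Icc (x0 * (1 - l * cA α)) (π - l)) :=
    ((strictAntiOn_robinWindow α x0 hl0 (by nlinarith)).mono Icc_subset_Ici_self).congr
      (hFW.symm.mono (Icc_subset_Icc_left hm.1))
  have hends : F (-π + l) ≤ F (π - l) := by
    have h := robinWindow_neg_le hc.le hcπ.le ⟨hx0, hx0π⟩ hl0.le (sub_nonneg.2 hlπ.le)
      (by linarith : π - l + l ≤ π)
    rwa [neg_sub, ← neg_add_eq_sub, ← hFW ⟨le_rfl, by linarith⟩, ← hFW ⟨by linarith, le_rfl⟩] at h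
  have hmono' := hmono.monotoneOn
  have hanti' := hanti.antitoneOn
  refine ⟨hmono, hanti,
    fun _ ha => apply_left_le_of_monotoneOn_of_antitoneOn hmono' hanti' hm.1 hm.2 hends ha, ?_,
    fun _ ha => apply_le_of_monotoneOn_of_antitoneOn hmono' hanti' hm.1 hm.2 ha, ?_⟩
  · rw [hFW ⟨le_rfl, by linarith⟩]
    exact robinWindow_neg_pi_add α x0 l (by linarith)
  · rw [hFW hm]
    exact robinWindow_apex hc.ne' hl0.le ⟨by nlinarith, hcx0.le⟩
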